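/- If a semiautomaton D₂ is homomorphically represented by a semiautomaton D₁, then every language recognised by an acceptor whose semiautomaton is D₂ is also recognised by some acceptor whose semiautomaton is the composition of D₁ with an input function. -/
import Mathlib


/-- Extended transition function of a semiautomaton. -/
def extTrans {Q A : Type*} (δ : Q → A → Q) (q : Q) (w : List A) : Q :=
  w.foldl δ q

/-- If a semiautomaton `D₂ = ⟨Sig2, Q₂, δ₂⟩` is homomorphically represented by a
semiautomaton `D₁ = ⟨Sig1, Q₁, δ₁⟩` (i.e., some subsemiautomaton of `D₁` maps
homomorphically onto `D₂`), then every language recognised by an acceptor with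
semiautomaton `D₂` is also recognised by an acceptor whose semiautomaton is the
composition of `D₁` with an input function `φ : Sig2 → Sig1`.  Acceptance of a
nonempty string `w ++ [a]` is Mealy-style: the output on the last letter `a`
from the state reached on `w` is `true`. -/
theorem homomorphic_representation_languages
    {Sig1 Q₁ Sig2 Q₂ : Type*}
    (δ₁ : Q₁ → Sig1 → Q₁) (δ₂ : Q₂ → Sig2 → Q₂)
    (hrep : ∃ (A : Set Sig1) (S : Set Q₁),
      (∀ q ∈ S, ∀ a ∈ A, δ₁ q a ∈ S) ∧
      ∃ (ψ₁ : Sig1 → Sig2) (ψ₂ : Q₁ → Q₂),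
        (∀ b : Sig2, ∃ a ∈ A, ψ₁ a = b) ∧
        (∀ p : Q₂, ∃ q ∈ S, ψ₂ q = p) ∧
        (∀ q ∈ S, ∀ a ∈ A, ψ₂ (δ₁ q a) = δ₂ (ψ₂ q) (ψ₁ a)))
    (q₂init : Q₂) (θ₂ : Q₂ → Sig2 → Bool) :
    ∃ (φ : Sig2 → Sig1) (q₁init : Q₁) (θ₁ : Q₁ → Sig2 → Bool),
      ∀ (w : List Sig2) (a : Sig2),
        θ₁ (extTrans (fun q σ => δ₁ q (φ σ)) q₁init w) a = true ↔
        θ₂ (extTrans δ₂ q₂init w) a = true := by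
  obtain ⟨A, S, hclosed, ψ₁, ψ₂, hψ₁surj, hψ₂surj, hhom⟩ := hrep
  choose φ hφA hφ using hψ₁surj
  obtain ⟨q₁init, hq₁S, hq₁⟩ := hψ₂surj q₂init
  refine ⟨φ, q₁init, fun q a => θ₂ (ψ₂ q) a, fun w a => ?_⟩
  suffices h : ∀ (w : List Sig2) (q : Q₁), q ∈ S →
      extTrans (fun q σ => δ₁ q (φ σ)) q w ∈ S ∧
      ψ₂ (extTrans (fun q σ => δ₁ q (φ σ)) q w) = extTrans δ₂ (ψ₂ q) w by
    simp only []; rw [(h w q₁init hq₁S).2, hq₁]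
  intro w
  induction w with
  | nil => intro q hq; exact ⟨hq, rfl⟩
  | cons b w ih =>
    intro q hq
    have h1 : δ₁ q (φ b) ∈ S := hclosed q hq _ (hφA b)
    obtain ⟨hS, heq⟩ := ih _ h1
    refine ⟨hS, ?_⟩
    simp only [extTrans, List.foldl_cons] at heq ⊢
    rw [heq, hhom q hq _ (hφA b), hφ]
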